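/- Let B₀, B₁, B₂ and E₁ be functions rational at infinity, and let U be a domain contained in an annulus Ω(r) on which B₀, B₁, B₂, E₁ are analytic. Suppose u and v are linearly independent analytic solutions on U of the equation y‴ + B₂y″ + B₁y′ + B₀y = 0, and that their Wronskian W = uv′ − u′v satisfies W′ + E₁W = 0 on U. Then there exists a function E₀, rational at infinity, such that u and v both solve y″ + E₁y′ + E₀y = 0 on the part of U where E₀ is analytic. -/

import Mathlib

/-- A function is rational at infinity if it is analytic on some annulus
`Ω(r) = {z : r < |z|}` and has at most polynomial growth there
(equivalently, at most a pole at `∞`). -/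
def RationalAtInfinity (a : ℂ → ℂ) : Prop :=
  ∃ r : ℝ, 0 < r ∧ AnalyticOnNhd ℂ a {z : ℂ | r < ‖z‖} ∧
    ∃ (n : ℕ) (C : ℝ), ∀ z : ℂ, r < ‖z‖ →
      ‖a z‖ ≤ C * ‖z‖ ^ n

/-!
Put `E₀ = B₁ - E₁' + E₁² - E₁ B₂` and `L y = y'' + E₁ y' + E₀ y`. For every solution `y` of the
third order equation, `(L y)' = (E₁ - B₂) L y + c y` with `c` independent of `y`. The equation
for the Wronskian `W` reads `u L v - v L u = 0`; differentiating it and using the identity above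
gives `u' L v - v' L u = 0`. Hence `W L u = W L v = 0`, and since `W ≢ 0` by linear independence,
`L u = L v = 0` by the identity theorem. `E₀` is rational at infinity because this class is closed
under sums, products and derivatives, the latter by Cauchy estimates on unit discs.
-/

open Filter Asymptotics Bornology Metric Set

theorem rationalAtInfinity_iff {a : ℂ → ℂ} :
    RationalAtInfinity a ↔
      (∀ᶠ z in cobounded ℂ, AnalyticAt ℂ a z) ∧ ∃ n : ℕ, a =O[cobounded ℂ] (· ^ n) := by
  constructor
  · rintro ⟨r, -, han, n, C, hC⟩
    have hr : ∀ᶠ z in cobounded ℂ, r < ‖z‖ := tendsto_norm_cobounded_atTop.eventually_gt_atTop r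
    exact ⟨hr.mono han, n, .of_bound C (hr.mono fun z hz => by simpa using hC z hz)⟩
  · rintro ⟨han, n, hO⟩
    obtain ⟨C, hC⟩ := hO.bound
    obtain ⟨R, -, hR⟩ := hasBasis_cobounded_norm.eventually_iff.1 (han.and hC)
    have hmem : ∀ z : ℂ, max R 1 < ‖z‖ → R ≤ ‖z‖ := fun z hz =>
      ((le_max_left _ _).trans_lt hz).le
    exact ⟨max R 1, by positivity, fun z hz => (hR (hmem z hz)).1, n, C,
      fun z hz => by simpa using (hR (hmem z hz)).2⟩

namespace RationalAtInfinity

variable {a b : ℂ → ℂ}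

theorem add (ha : RationalAtInfinity a) (hb : RationalAtInfinity b) :
    RationalAtInfinity (fun z => a z + b z) := by
  rw [rationalAtInfinity_iff] at *
  obtain ⟨ha, n, haO⟩ := ha
  obtain ⟨hb, m, hbO⟩ := hb
  exact ⟨(ha.and hb).mono fun z h => h.1.add h.2, max n m,
    (haO.trans (isBigO_pow_pow_cobounded_of_le (le_max_left n m))).add
      (hbO.trans (isBigO_pow_pow_cobounded_of_le (le_max_right n m)))⟩

theorem sub (ha : RationalAtInfinity a) (hb : RationalAtInfinity b) :
    RationalAtInfinity (fun z => a z - b z) := by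
  rw [rationalAtInfinity_iff] at *
  obtain ⟨ha, n, haO⟩ := ha
  obtain ⟨hb, m, hbO⟩ := hb
  exact ⟨(ha.and hb).mono fun z h => h.1.sub h.2, max n m,
    (haO.trans (isBigO_pow_pow_cobounded_of_le (le_max_left n m))).sub
      (hbO.trans (isBigO_pow_pow_cobounded_of_le (le_max_right n m)))⟩

theorem mul (ha : RationalAtInfinity a) (hb : RationalAtInfinity b) :
    RationalAtInfinity (fun z => a z * b z) := by
  rw [rationalAtInfinity_iff] at *
  obtain ⟨ha, n, haO⟩ := ha
  obtain ⟨hb, m, hbO⟩ := hb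
  exact ⟨(ha.and hb).mono fun z h => h.1.mul h.2, n + m,
    (haO.mul hbO).congr_right fun z => (pow_add z n m).symm⟩

theorem deriv (ha : RationalAtInfinity a) : RationalAtInfinity (deriv a) := by
  rw [rationalAtInfinity_iff] at *
  obtain ⟨han, n, haO⟩ := ha
  obtain ⟨C, hC₀, hC⟩ := haO.exists_pos
  obtain ⟨R, -, hR⟩ := hasBasis_cobounded_norm.eventually_iff.1 (han.and hC.bound)
  refine ⟨han.mono fun z hz => hz.deriv, n, .of_bound (C * 2 ^ n) ?_⟩
  filter_upwards [eventually_cobounded_le_norm (max (R + 1) 1)] with z hz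
  have hball : ∀ w ∈ closedBall z 1, R ≤ ‖w‖ ∧ ‖w‖ ≤ 2 * ‖z‖ := by
    intro w hw
    rw [mem_closedBall, dist_eq_norm] at hw
    have h₁ := norm_sub_norm_le z w
    have h₂ := norm_sub_norm_le w z
    rw [norm_sub_rev] at h₁
    constructor <;> linarith [le_max_left (R + 1) 1, le_max_right (R + 1) 1]
  have hd : DiffContOnCl ℂ a (ball z 1) :=
    DifferentiableOn.diffContOnCl_ball (U := closedBall z 1)
      (fun w hw => (hR (hball w hw).1).1.differentiableAt.differentiableWithinAt) subset_rfl
  have hsphere : ∀ w ∈ sphere z 1, ‖a w‖ ≤ C * 2 ^ n * ‖z ^ n‖ := by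
    intro w hw
    calc ‖a w‖ ≤ C * ‖w ^ n‖ := (hR (hball w (sphere_subset_closedBall hw)).1).2
      _ ≤ C * (2 * ‖z‖) ^ n := by
        rw [norm_pow]
        gcongr
        exact (hball w (sphere_subset_closedBall hw)).2
      _ = C * 2 ^ n * ‖z ^ n‖ := by rw [norm_pow, mul_pow, mul_assoc]
  simpa using Complex.norm_deriv_le_of_forall_mem_sphere_norm_le one_pos hd hsphere

end RationalAtInfinity

section Wronskian

variable {𝕜 : Type*} [RCLike 𝕜] {U : Set 𝕜} {f g p q u v y : 𝕜 → 𝕜} {z : 𝕜}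

theorem eqOn_zero_of_mul_eqOn_zero
    (hUo : IsOpen U) (hUc : IsPreconnected U) (hf : AnalyticOnNhd 𝕜 f U) (hg : ContinuousOn g U)
    {z₁ : 𝕜} (hz₁ : z₁ ∈ U) (hfz₁ : f z₁ ≠ 0) (hfg : ∀ z ∈ U, f z * g z = 0) :
    EqOn g 0 U := by
  intro z₂ hz₂
  by_contra hgz₂
  have hf₀ : f =ᶠ[nhds z₂] 0 := by
    filter_upwards [(hg.continuousAt (hUo.mem_nhds hz₂)).eventually_ne hgz₂,
      hUo.mem_nhds hz₂] with w hgw hw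
    exact (mul_eq_zero.mp (hfg w hw)).resolve_right hgw
  exact hfz₁ (hf.eqOn_zero_of_preconnected_of_eventuallyEq_zero hUc hz₂ hf₀ hz₁)

noncomputable def wronskian (u v : 𝕜 → 𝕜) (z : 𝕜) : 𝕜 := u z * deriv v z - deriv u z * v z

theorem AnalyticOnNhd.wronskian (hu : AnalyticOnNhd 𝕜 u U) (hv : AnalyticOnNhd 𝕜 v U) :
    AnalyticOnNhd 𝕜 (wronskian u v) U := fun z hz =>
  ((hu z hz).mul (hv z hz).deriv).sub ((hu z hz).deriv.mul (hv z hz))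

theorem deriv_wronskian (hu : AnalyticAt 𝕜 u z) (hv : AnalyticAt 𝕜 v z) :
    deriv (wronskian u v) z = u z * deriv (deriv v) z - deriv (deriv u) z * v z := by
  have h := (hu.differentiableAt.hasDerivAt.mul hv.deriv.differentiableAt.hasDerivAt).sub
    (hu.deriv.differentiableAt.hasDerivAt.mul hv.differentiableAt.hasDerivAt)
  rw [show wronskian u v = u * deriv v - deriv u * v from rfl, h.deriv]
  ring

/-- Off the zeros of `u`, the Wronskian is `u²` times the derivative of `v / u`. -/
theorem exists_eqOn_const_mul_of_wronskian_eqOn_zero (hUo : IsOpen U) (hUc : IsPreconnected U)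
    (hu : AnalyticOnNhd 𝕜 u U) (hv : AnalyticOnNhd 𝕜 v U) {z₀ : 𝕜} (hz₀ : z₀ ∈ U)
    (huz₀ : u z₀ ≠ 0) (hW : EqOn (wronskian u v) 0 U) : ∃ c, EqOn v (fun z => c * u z) U := by
  obtain ⟨ε, hε, hball⟩ := eventually_nhds_iff_ball.mp
    ((hu z₀ hz₀).continuousAt.eventually_ne huz₀ |>.and (hUo.mem_nhds hz₀))
  have hquot : ∀ w ∈ ball z₀ ε, HasDerivAt (fun z => v z / u z) 0 w := by
    intro w hw
    obtain ⟨huw, hwU⟩ := hball w hw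
    have hq := (hv w hwU).differentiableAt.hasDerivAt.div (hu w hwU).differentiableAt.hasDerivAt huw
    have hWw : u w * deriv v w - deriv u w * v w = 0 := hW hwU
    rwa [show deriv v w * u w - v w * deriv u w = 0 by linear_combination hWw, zero_div] at hq
  obtain ⟨c, hc⟩ := isOpen_ball.exists_is_const_of_deriv_eq_zero (convex_ball z₀ ε).isPreconnected
    (fun w hw => (hquot w hw).differentiableAt.differentiableWithinAt)
    (fun w hw => (hquot w hw).deriv)
  refine ⟨c, fun z hz => sub_eq_zero.mp (?_ : (fun z => v z - c * u z) z = 0)⟩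
  refine (hv.sub (analyticOnNhd_const.mul hu)).eqOn_zero_of_preconnected_of_eventuallyEq_zero
    hUc hz₀ ?_ hz
  filter_upwards [ball_mem_nhds z₀ hε] with w hw
  show v w - c * u w = 0
  rw [← hc w hw, div_mul_cancel₀ _ (hball w hw).1, sub_self]

theorem exists_wronskian_ne_zero (hUo : IsOpen U) (hUc : IsPreconnected U)
    (hu : AnalyticOnNhd 𝕜 u U) (hv : AnalyticOnNhd 𝕜 v U)
    (hindep : ∀ c₁ c₂ : 𝕜, (∀ z ∈ U, c₁ * u z + c₂ * v z = 0) → c₁ = 0 ∧ c₂ = 0) :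
    ∃ z ∈ U, wronskian u v z ≠ 0 := by
  by_contra! hW
  obtain ⟨z₀, hz₀, huz₀⟩ : ∃ z₀ ∈ U, u z₀ ≠ 0 := by
    by_contra! hu₀
    exact one_ne_zero (hindep 1 0 fun z hz => by simp [hu₀ z hz]).1
  obtain ⟨c, hc⟩ := exists_eqOn_const_mul_of_wronskian_eqOn_zero hUo hUc hu hv hz₀ huz₀ hW
  exact one_ne_zero (hindep (-c) 1 fun z hz => by rw [hc hz]; ring).2

noncomputable def secondOrderOp (p q y : 𝕜 → 𝕜) (z : 𝕜) : 𝕜 :=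
  deriv (deriv y) z + p z * deriv y z + q z * y z

theorem AnalyticOnNhd.secondOrderOp (hp : AnalyticOnNhd 𝕜 p U) (hq : AnalyticOnNhd 𝕜 q U)
    (hy : AnalyticOnNhd 𝕜 y U) : AnalyticOnNhd 𝕜 (secondOrderOp p q y) U := fun z hz =>
  (((hy z hz).deriv.deriv).add ((hp z hz).mul (hy z hz).deriv)).add ((hq z hz).mul (hy z hz))

theorem deriv_wronskian_add_mul_wronskian (hu : AnalyticAt 𝕜 u z) (hv : AnalyticAt 𝕜 v z) :
    deriv (wronskian u v) z + p z * wronskian u v z =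
      u z * secondOrderOp p q v z - v z * secondOrderOp p q u z := by
  rw [deriv_wronskian hu hv, wronskian, secondOrderOp, secondOrderOp]
  ring

/-- `hpq` is exactly the condition under which the `y'` terms cancel. -/
theorem hasDerivAt_secondOrderOp {b₀ b₁ b₂ : 𝕜 → 𝕜} (hy : AnalyticAt 𝕜 y z)
    (hp : DifferentiableAt 𝕜 p z) (hq : DifferentiableAt 𝕜 q z)
    (hy₃ : deriv (deriv (deriv y)) z + b₂ z * deriv (deriv y) z + b₁ z * deriv y z
      + b₀ z * y z = 0)
    (hpq : q z = b₁ z - deriv p z + p z * p z - p z * b₂ z) :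
    HasDerivAt (secondOrderOp p q y)
      ((p z - b₂ z) * secondOrderOp p q y z + (deriv q z - b₀ z - (p z - b₂ z) * q z) * y z) z := by
  have h := (hy.deriv.deriv.differentiableAt.hasDerivAt.add
    (hp.hasDerivAt.mul hy.deriv.differentiableAt.hasDerivAt)).add
      (hq.hasDerivAt.mul hy.differentiableAt.hasDerivAt)
  refine h.congr_deriv ?_
  rw [secondOrderOp]
  linear_combination hy₃ + deriv y z * hpq

theorem deriv_mul_sub_deriv_mul_eqOn_zero (hUo : IsOpen U) {h a c : 𝕜 → 𝕜}
    (hu : ∀ z ∈ U, DifferentiableAt 𝕜 u z) (hv : ∀ z ∈ U, DifferentiableAt 𝕜 v z)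
    (hg : ∀ z ∈ U, HasDerivAt g (a z * g z + c z * u z) z)
    (hh : ∀ z ∈ U, HasDerivAt h (a z * h z + c z * v z) z)
    (huv : ∀ z ∈ U, u z * h z - v z * g z = 0) :
    ∀ z ∈ U, deriv u z * h z - deriv v z * g z = 0 := by
  intro z hz
  have hderiv := ((hu z hz).hasDerivAt.mul (hh z hz)).sub ((hv z hz).hasDerivAt.mul (hg z hz))
  have hzero : HasDerivAt (u * h - v * g) 0 z := (hasDerivAt_const z 0).congr_of_eventuallyEq
    (by filter_upwards [hUo.mem_nhds hz] with w hw using huv w hw)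
  linear_combination hderiv.unique hzero - a z * huv z hz

end Wronskian

theorem wronskian_first_order_implies_second_order_equation_general
    (B₀ B₁ B₂ E₁ : ℂ → ℂ)
    (hB₁ : RationalAtInfinity B₁)
    (hB₂ : RationalAtInfinity B₂) (hE₁ : RationalAtInfinity E₁)
    (U : Set ℂ) (hUo : IsOpen U) (hUc : IsConnected U)
    (hB₁U : AnalyticOnNhd ℂ B₁ U)
    (hB₂U : AnalyticOnNhd ℂ B₂ U) (hE₁U : AnalyticOnNhd ℂ E₁ U)
    (u v : ℂ → ℂ) (hu : AnalyticOnNhd ℂ u U) (hv : AnalyticOnNhd ℂ v U)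
    (hueq : ∀ z ∈ U, iteratedDeriv 3 u z + B₂ z * iteratedDeriv 2 u z
        + B₁ z * deriv u z + B₀ z * u z = 0)
    (hveq : ∀ z ∈ U, iteratedDeriv 3 v z + B₂ z * iteratedDeriv 2 v z
        + B₁ z * deriv v z + B₀ z * v z = 0)
    (hindep : ∀ c₁ c₂ : ℂ, (∀ z ∈ U, c₁ * u z + c₂ * v z = 0) → c₁ = 0 ∧ c₂ = 0)
    (hW : ∀ z ∈ U, deriv (fun w => u w * deriv v w - deriv u w * v w) z
        + E₁ z * (u z * deriv v z - deriv u z * v z) = 0) :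
    ∃ E₀ : ℂ → ℂ, RationalAtInfinity E₀ ∧
      ∀ z ∈ U, AnalyticAt ℂ E₀ z →
        iteratedDeriv 2 u z + E₁ z * deriv u z + E₀ z * u z = 0 ∧
        iteratedDeriv 2 v z + E₁ z * deriv v z + E₀ z * v z = 0 := by
  set E₀ : ℂ → ℂ := fun z => B₁ z - deriv E₁ z + E₁ z * E₁ z - E₁ z * B₂ z
  have hE₀U : AnalyticOnNhd ℂ E₀ U := fun z hz =>
    (((hB₁U z hz).sub (hE₁U z hz).deriv).add ((hE₁U z hz).mul (hE₁U z hz))).sub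
      ((hE₁U z hz).mul (hB₂U z hz))
  simp only [iteratedDeriv_succ, iteratedDeriv_zero] at hueq hveq ⊢
  have hcross : ∀ z ∈ U, u z * secondOrderOp E₁ E₀ v z - v z * secondOrderOp E₁ E₀ u z = 0 :=
    fun z hz => by rw [← deriv_wronskian_add_mul_wronskian (hu z hz) (hv z hz)]; exact hW z hz
  have hcross_deriv := deriv_mul_sub_deriv_mul_eqOn_zero hUo
    (fun z hz => (hu z hz).differentiableAt) (fun z hz => (hv z hz).differentiableAt)
    (fun z hz => hasDerivAt_secondOrderOp (hu z hz) (hE₁U z hz).differentiableAt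
      (hE₀U z hz).differentiableAt (hueq z hz) rfl)
    (fun z hz => hasDerivAt_secondOrderOp (hv z hz) (hE₁U z hz).differentiableAt
      (hE₀U z hz).differentiableAt (hveq z hz) rfl) hcross
  obtain ⟨z₁, hz₁, hWz₁⟩ := exists_wronskian_ne_zero hUo hUc.isPreconnected hu hv hindep
  have hLu : EqOn (secondOrderOp E₁ E₀ u) 0 U :=
    eqOn_zero_of_mul_eqOn_zero hUo hUc.isPreconnected (hu.wronskian hv)
      (hE₁U.secondOrderOp hE₀U hu).continuousOn hz₁ hWz₁ fun w hw => by
        rw [wronskian]; linear_combination deriv u w * hcross w hw - u w * hcross_deriv w hw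
  have hLv : EqOn (secondOrderOp E₁ E₀ v) 0 U :=
    eqOn_zero_of_mul_eqOn_zero hUo hUc.isPreconnected (hu.wronskian hv)
      (hE₁U.secondOrderOp hE₀U hv).continuousOn hz₁ hWz₁ fun w hw => by
        rw [wronskian]; linear_combination deriv v w * hcross w hw - v w * hcross_deriv w hw
  exact ⟨E₀, ((hB₁.sub hE₁.deriv).add (hE₁.mul hE₁)).sub (hE₁.mul hB₂),
    fun z hz _ => ⟨hLu hz, hLv hz⟩⟩

/-- Lemma 3.4: if `u, v` are linearly independent solutions of a
third order equation with coefficients rational at infinity, and their Wronskian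
`W = uv' − u'v` satisfies `W' + E₁W = 0` with `E₁` rational at infinity, then
`u` and `v` solve a common second order equation `y'' + E₁y' + E₀y = 0` with
`E₀` rational at infinity. -/
theorem wronskian_first_order_implies_second_order_equation
    (B₀ B₁ B₂ E₁ : ℂ → ℂ)
    (hB₀ : RationalAtInfinity B₀) (hB₁ : RationalAtInfinity B₁)
    (hB₂ : RationalAtInfinity B₂) (hE₁ : RationalAtInfinity E₁)
    (r : ℝ) (hr : 0 < r) (U : Set ℂ) (hUo : IsOpen U) (hUc : IsConnected U)
    (hUsub : U ⊆ {z : ℂ | r < ‖z‖})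
    (hB₀U : AnalyticOnNhd ℂ B₀ U) (hB₁U : AnalyticOnNhd ℂ B₁ U)
    (hB₂U : AnalyticOnNhd ℂ B₂ U) (hE₁U : AnalyticOnNhd ℂ E₁ U)
    (u v : ℂ → ℂ) (hu : AnalyticOnNhd ℂ u U) (hv : AnalyticOnNhd ℂ v U)
    (hueq : ∀ z ∈ U, iteratedDeriv 3 u z + B₂ z * iteratedDeriv 2 u z
        + B₁ z * deriv u z + B₀ z * u z = 0)
    (hveq : ∀ z ∈ U, iteratedDeriv 3 v z + B₂ z * iteratedDeriv 2 v z
        + B₁ z * deriv v z + B₀ z * v z = 0)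
    (hindep : ∀ c₁ c₂ : ℂ, (∀ z ∈ U, c₁ * u z + c₂ * v z = 0) → c₁ = 0 ∧ c₂ = 0)
    (hW : ∀ z ∈ U, deriv (fun w => u w * deriv v w - deriv u w * v w) z
        + E₁ z * (u z * deriv v z - deriv u z * v z) = 0) :
    ∃ E₀ : ℂ → ℂ, RationalAtInfinity E₀ ∧
      ∀ z ∈ U, AnalyticAt ℂ E₀ z →
        iteratedDeriv 2 u z + E₁ z * deriv u z + E₀ z * u z = 0 ∧
        iteratedDeriv 2 v z + E₁ z * deriv v z + E₀ z * v z = 0 :=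
  wronskian_first_order_implies_second_order_equation_general B₀ B₁ B₂ E₁ hB₁ hB₂ hE₁ U hUo hUc hB₁U
    hB₂U hE₁U u v hu hv hueq hveq hindep hW
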